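/- Let M be a spanning Δ-divisible multiset of points in PG(k-1,q) with k ≥ 2, and let Q be a point. Define the projection M_Q on PG(k-2,q) by M_Q(L/Q) = M(L) - M(Q) for every line L through Q. Then M_Q is Δ-divisible, has cardinality |M| - M(Q), its span has dimension k-1, and its maximum point multiplicity equals max over lines L through Q of (M(L) - M(Q)). -/

import Mathlib

open scoped Classical

noncomputable def MVal {F V : Type*} [Field F] [AddCommGroup V] [Module F V]
    (M : Projectivization F V → ℕ) (K : Submodule F V) : ℕ :=
  ∑ᶠ P ∈ {P : Projectivization F V | P.submodule ≤ K}, M P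

def IsDivisible {F V : Type*} [Field F] [AddCommGroup V] [Module F V] (Δ : ℕ)
    (M : Projectivization F V → ℕ) : Prop :=
  ∀ H : Submodule F V, Module.finrank F H + 1 = Module.finrank F V →
    MVal M H ≡ MVal M ⊤ [MOD Δ]

def IsSpanning {F V : Type*} [Field F] [AddCommGroup V] [Module F V]
    (M : Projectivization F V → ℕ) : Prop :=
  (⨆ P ∈ {P : Projectivization F V | 0 < M P}, P.submodule) = ⊤

def gaussNum (q k : ℕ) : ℕ := ∑ i ∈ Finset.range k, q ^ i

def IsProjBase {F V : Type*} [Field F] [AddCommGroup V] [Module F V]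
    (n : ℕ) (B : Finset (Projectivization F V)) : Prop :=
  B.card = n ∧ ∀ T ⊆ B, T.card = n - 1 →
    Module.finrank F ((⨆ P ∈ T, Projectivization.submodule P) : Submodule F V) = n - 1

/-!
Points of the quotient `V ⧸ Q` are exactly the images of the lines through `Q`, and for a
subspace `K ⊇ Q` the lines through `Q` inside `K` partition the points of `K` other than `Q`.
Hence `M_Q(K/Q) = M(K) - M(Q)` for every such `K`. Since the hyperplanes of the quotient are the
images `K/Q` of the hyperplanes `K ∋ Q`, the divisibility of `M` passes to `M_Q`; spanning passes
to `M_Q` because the quotient map sends a spanning set to a spanning set.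
-/

open Submodule Module
open scoped LinearAlgebra.Projectivization

namespace Projectivization

variable {F V : Type*} [Field F] [AddCommGroup V] [Module F V]

theorem submodule_le_submodule_iff {P Q : ℙ F V} : P.submodule ≤ Q.submodule ↔ P = Q :=
  ⟨fun h => submodule_injective <| eq_of_le_of_finrank_eq h <| by
      rw [finrank_submodule, finrank_submodule],
    fun h => h ▸ le_rfl⟩

theorem mkQ_rep_ne_zero {P Q : ℙ F V} (h : P ≠ Q) : Q.submodule.mkQ P.rep ≠ 0 := by
  rwa [Ne, mkQ_apply, Quotient.mk_eq_zero, ← span_singleton_le_iff_mem, ← submodule_eq,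
    submodule_le_submodule_iff]

theorem finrank_map_mkQ_submodule {P Q : ℙ F V} (h : P ≠ Q) :
    finrank F (P.submodule.map Q.submodule.mkQ) = 1 := by
  rw [P.submodule_eq, map_span, Set.image_singleton, finrank_span_singleton (mkQ_rep_ne_zero h)]

theorem finrank_map_mkQ_add_one [FiniteDimensional F V] (Q : ℙ F V) {K : Submodule F V}
    (hK : Q.submodule ≤ K) : finrank F (K.map Q.submodule.mkQ) + 1 = finrank F K := by
  let f : K →ₗ[F] V ⧸ Q.submodule := Q.submodule.mkQ ∘ₗ K.subtype
  have hrange : LinearMap.range f = K.map Q.submodule.mkQ := by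
    rw [LinearMap.range_comp, range_subtype]
  have hker : finrank F (LinearMap.ker f) = 1 := by
    rw [LinearMap.ker_comp, ker_mkQ, (comapSubtypeEquivOfLe hK).finrank_eq, Q.finrank_submodule]
  rw [← hrange, ← hker, LinearMap.finrank_range_add_finrank_ker]

def lineOver (Q : ℙ F V) (P' : ℙ F (V ⧸ Q.submodule)) : Submodule F V :=
  P'.submodule.comap Q.submodule.mkQ

theorem le_lineOver (Q : ℙ F V) (P' : ℙ F (V ⧸ Q.submodule)) :
    Q.submodule ≤ lineOver Q P' :=
  le_comap_mkQ _ _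

theorem map_lineOver (Q : ℙ F V) (P' : ℙ F (V ⧸ Q.submodule)) :
    (lineOver Q P').map Q.submodule.mkQ = P'.submodule :=
  map_comap_eq_of_surjective (mkQ_surjective _) _

theorem finrank_lineOver [FiniteDimensional F V] (Q : ℙ F V) (P' : ℙ F (V ⧸ Q.submodule)) :
    finrank F (lineOver Q P') = 2 := by
  have h := finrank_map_mkQ_add_one Q (le_lineOver Q P')
  rw [map_lineOver, P'.finrank_submodule] at h
  omega

theorem lineOver_mk''_map {Q : ℙ F V} {L : Submodule F V} (hL : Q.submodule ≤ L)
    (h : finrank F (L.map Q.submodule.mkQ) = 1) :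
    lineOver Q (mk'' _ h) = L := by
  rw [lineOver, submodule_mk'', comap_map_mkQ, sup_eq_right.2 hL]

theorem lineOver_le {Q : ℙ F V} {K : Submodule F V} (hK : Q.submodule ≤ K)
    {P' : ℙ F (V ⧸ Q.submodule)} (hP' : P'.submodule ≤ K.map Q.submodule.mkQ) :
    lineOver Q P' ≤ K :=
  (comap_mono hP').trans (by rw [comap_map_mkQ, sup_eq_right.2 hK])

theorem map_mkQ_submodule_eq_iff {P Q : ℙ F V} (hPQ : P ≠ Q) {P' : ℙ F (V ⧸ Q.submodule)} :
    P.submodule.map Q.submodule.mkQ = P'.submodule ↔ P.submodule ≤ lineOver Q P' := by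
  rw [lineOver, ← map_le_iff_le_comap]
  refine ⟨fun h => h.le, fun h => eq_of_le_of_finrank_eq h ?_⟩
  rw [finrank_map_mkQ_submodule hPQ, P'.finrank_submodule]

end Projectivization

open Projectivization

section Multiset

variable {F V : Type*} [Field F] [AddCommGroup V] [Module F V]

theorem MVal_eq_sum [Fintype (ℙ F V)] (M : ℙ F V → ℕ) (K : Submodule F V) :
    MVal M K = ∑ P with P.submodule ≤ K, M P := by
  rw [MVal, ← finsum_mem_coe_finset, Finset.coe_filter]
  simp only [Finset.mem_univ, true_and]

theorem MVal_eq_add_sum_erase [Fintype (ℙ F V)] (M : ℙ F V → ℕ) {Q : ℙ F V}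
    {K : Submodule F V} (hQ : Q.submodule ≤ K) :
    MVal M K = M Q + ∑ P ∈ ({P | P.submodule ≤ K} : Finset (ℙ F V)).erase Q, M P := by
  rw [MVal_eq_sum]
  exact (Finset.add_sum_erase _ M (by simpa using hQ)).symm

/-- The paper's `M_Q`. The subtraction does not truncate, as `Q` lies on `lineOver Q P'`. -/
noncomputable def projectThrough (M : ℙ F V → ℕ) (Q : ℙ F V) :
    ℙ F (V ⧸ Q.submodule) → ℕ :=
  fun P' => MVal M (lineOver Q P') - M Q

theorem projectThrough_eq_sum [Fintype (ℙ F V)] (M : ℙ F V → ℕ) (Q : ℙ F V)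
    (P' : ℙ F (V ⧸ Q.submodule)) :
    projectThrough M Q P' =
      ∑ P ∈ ({P | P.submodule ≤ lineOver Q P'} : Finset (ℙ F V)).erase Q, M P := by
  rw [projectThrough, MVal_eq_add_sum_erase M (le_lineOver Q P'), Nat.add_sub_cancel_left]

theorem filter_map_mkQ_eq_erase_lineOver [Fintype (ℙ F V)] {Q : ℙ F V} {K : Submodule F V}
    (hK : Q.submodule ≤ K) {P' : ℙ F (V ⧸ Q.submodule)}
    (hP' : P'.submodule ≤ K.map Q.submodule.mkQ) :
    {P ∈ ({P | P.submodule ≤ K} : Finset (ℙ F V)).erase Q |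
        P.submodule.map Q.submodule.mkQ = P'.submodule} =
      ({P | P.submodule ≤ lineOver Q P'} : Finset (ℙ F V)).erase Q := by
  ext P
  simp only [Finset.mem_filter, Finset.mem_erase, Finset.mem_univ, true_and]
  constructor
  · rintro ⟨⟨hPQ, -⟩, h⟩
    exact ⟨hPQ, (map_mkQ_submodule_eq_iff hPQ).1 h⟩
  · rintro ⟨hPQ, h⟩
    exact ⟨⟨hPQ, h.trans (lineOver_le hK hP')⟩, (map_mkQ_submodule_eq_iff hPQ).2 h⟩

variable [Finite V]

theorem projectThrough_pos {M : ℙ F V → ℕ} {P Q : ℙ F V} (hPQ : P ≠ Q) (hMP : 0 < M P)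
    {P' : ℙ F (V ⧸ Q.submodule)} (hP : P.submodule ≤ lineOver Q P') :
    0 < projectThrough M Q P' := by
  have := Fintype.ofFinite (ℙ F V)
  rw [projectThrough_eq_sum]
  exact hMP.trans_le (Finset.single_le_sum (fun _ _ => Nat.zero_le _) (by simp [hPQ, hP]))

theorem MVal_projectThrough_map_mkQ (M : ℙ F V → ℕ) {Q : ℙ F V} {K : Submodule F V}
    (hK : Q.submodule ≤ K) :
    MVal (projectThrough M Q) (K.map Q.submodule.mkQ) + M Q = MVal M K := by
  have : Finite (V ⧸ Q.submodule) := Finite.of_surjective _ (mkQ_surjective _)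
  have := Fintype.ofFinite (ℙ F V)
  have := Fintype.ofFinite (ℙ F (V ⧸ Q.submodule))
  set S := ({P | P.submodule ≤ K} : Finset (ℙ F V)).erase Q
  set S' := ({P' | P'.submodule ≤ K.map Q.submodule.mkQ} : Finset (ℙ F (V ⧸ Q.submodule)))
  have hmaps : ∀ P ∈ S,
      P.submodule.map Q.submodule.mkQ ∈ S'.image Projectivization.submodule := by
    intro P hP
    obtain ⟨hPQ, hPK⟩ : P ≠ Q ∧ P.submodule ≤ K := by simpa [S] using hP
    refine Finset.mem_image.2 ⟨mk'' _ (finrank_map_mkQ_submodule hPQ), ?_, submodule_mk'' _ _⟩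
    simpa [S', submodule_mk''] using map_mono hPK
  have hfiber : ∀ P' ∈ S', projectThrough M Q P' =
      ∑ P ∈ S with P.submodule.map Q.submodule.mkQ = P'.submodule, M P := by
    intro P' hP'
    rw [projectThrough_eq_sum, filter_map_mkQ_eq_erase_lineOver hK (by simpa [S'] using hP')]
  rw [MVal_eq_add_sum_erase M hK, MVal_eq_sum, add_comm, ← Finset.sum_fiberwise_of_maps_to hmaps,
    Finset.sum_image submodule_injective.injOn]
  exact congrArg _ (Finset.sum_congr rfl hfiber)

theorem MVal_projectThrough_top (M : ℙ F V → ℕ) (Q : ℙ F V) :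
    MVal (projectThrough M Q) ⊤ + M Q = MVal M ⊤ := by
  have h := MVal_projectThrough_map_mkQ M (le_top : Q.submodule ≤ ⊤)
  rwa [Submodule.map_top, range_mkQ] at h

theorem IsDivisible.projectThrough {Δ : ℕ} {M : ℙ F V → ℕ} (hM : IsDivisible Δ M)
    (Q : ℙ F V) :
    IsDivisible Δ (projectThrough M Q) := by
  intro H hH
  set K := H.comap Q.submodule.mkQ
  have hQK : Q.submodule ≤ K := le_comap_mkQ _ _
  have hKH : K.map Q.submodule.mkQ = H := map_comap_eq_of_surjective (mkQ_surjective _) _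
  have hK : finrank F K + 1 = finrank F V := by
    have h1 := finrank_map_mkQ_add_one Q hQK
    have h2 := Q.submodule.finrank_quotient_add_finrank
    rw [hKH] at h1
    rw [Q.finrank_submodule] at h2
    omega
  have h := hM K hK
  rw [← MVal_projectThrough_map_mkQ M hQK, ← MVal_projectThrough_top M Q, hKH] at h
  exact Nat.ModEq.add_right_cancel' _ h

theorem IsSpanning.projectThrough {M : ℙ F V → ℕ} (hM : IsSpanning M) (Q : ℙ F V) :
    IsSpanning (projectThrough M Q) := by
  refine top_unique ?_
  calc (⊤ : Submodule F (V ⧸ Q.submodule))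
      = (⨆ P ∈ {P : ℙ F V | 0 < M P}, P.submodule).map Q.submodule.mkQ := by
        rw [hM, Submodule.map_top, range_mkQ]
    _ = ⨆ P ∈ {P : ℙ F V | 0 < M P}, P.submodule.map Q.submodule.mkQ := by
        simp only [Submodule.map_iSup]
    _ ≤ _ := by
      refine iSup₂_le fun P (hP : 0 < M P) => ?_
      by_cases hPQ : P = Q
      · rw [hPQ, mkQ_map_self]
        exact bot_le
      · set P' := mk'' _ (finrank_map_mkQ_submodule hPQ)
        have hP' : P'.submodule = P.submodule.map Q.submodule.mkQ := submodule_mk'' _ _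
        have hpos := projectThrough_pos hPQ hP ((map_mkQ_submodule_eq_iff hPQ).1 hP'.symm)
        exact hP' ▸ le_biSup Projectivization.submodule hpos

theorem range_projectThrough (M : ℙ F V → ℕ) (Q : ℙ F V) :
    Set.range (projectThrough M Q) = {m | ∃ L : Submodule F V,
      Q.submodule ≤ L ∧ finrank F L = 2 ∧ m = MVal M L - M Q} := by
  ext m
  constructor
  · rintro ⟨P', rfl⟩
    exact ⟨lineOver Q P', le_lineOver Q P', finrank_lineOver Q P', rfl⟩
  · rintro ⟨L, hQL, hL, rfl⟩
    have h1 : finrank F (L.map Q.submodule.mkQ) = 1 := by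
      have h := finrank_map_mkQ_add_one Q hQL
      omega
    exact ⟨mk'' _ h1, by rw [projectThrough, lineOver_mk''_map hQL]⟩

end Multiset

theorem stmt_18_general {F : Type*} [Field F] [Fintype F] (k Δ : ℕ)
    (M : Projectivization F (Fin k → F) → ℕ)
    (hspan : IsSpanning M) (hdiv : IsDivisible Δ M)
    (Q : Projectivization F (Fin k → F))
    (N : Projectivization F ((Fin k → F) ⧸ Q.submodule) → ℕ)
    (hN : ∀ (L : Submodule F (Fin k → F))
        (P' : Projectivization F ((Fin k → F) ⧸ Q.submodule)),
      Q.submodule ≤ L → Module.finrank F L = 2 →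
      Submodule.map Q.submodule.mkQ L = P'.submodule →
      N P' = MVal M L - M Q) :
    IsDivisible Δ N ∧
    MVal N ⊤ = MVal M ⊤ - M Q ∧
    IsSpanning N ∧
    Module.finrank F ((Fin k → F) ⧸ Q.submodule) = k - 1 ∧
    sSup (Set.range N) =
      sSup {m : ℕ | ∃ L : Submodule F (Fin k → F),
        Q.submodule ≤ L ∧ Module.finrank F L = 2 ∧ m = MVal M L - M Q} := by
  obtain rfl : N = projectThrough M Q := funext fun P' =>
    hN _ P' (le_lineOver Q P') (finrank_lineOver Q P') (map_lineOver Q P')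
  refine ⟨hdiv.projectThrough Q, ?_, hspan.projectThrough Q, ?_, by rw [range_projectThrough]⟩
  · have := MVal_projectThrough_top M Q
    omega
  · rw [finrank_quotient, finrank_fin_fun, Q.finrank_submodule]

theorem stmt_18 {F : Type*} [Field F] [Fintype F] (k Δ : ℕ) (hk : 2 ≤ k)
    (M : Projectivization F (Fin k → F) → ℕ)
    (hspan : IsSpanning M) (hdiv : IsDivisible Δ M)
    (Q : Projectivization F (Fin k → F))
    (N : Projectivization F ((Fin k → F) ⧸ Q.submodule) → ℕ)
    (hN : ∀ (L : Submodule F (Fin k → F))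
        (P' : Projectivization F ((Fin k → F) ⧸ Q.submodule)),
      Q.submodule ≤ L → Module.finrank F L = 2 →
      Submodule.map Q.submodule.mkQ L = P'.submodule →
      N P' = MVal M L - M Q) :
    IsDivisible Δ N ∧
    MVal N ⊤ = MVal M ⊤ - M Q ∧
    IsSpanning N ∧
    Module.finrank F ((Fin k → F) ⧸ Q.submodule) = k - 1 ∧
    sSup (Set.range N) =
      sSup {m : ℕ | ∃ L : Submodule F (Fin k → F),
        Q.submodule ≤ L ∧ Module.finrank F L = 2 ∧ m = MVal M L - M Q} :=
  stmt_18_general k Δ M hspan hdiv Q N hN
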